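/- arXiv:1901.11393 — 4 statements merged into one kernel-verified Lean document; each statement's English description precedes it below -/
import Mathlib

section
/- Let R be a ring and let M₁ be the submodule of the formal power series module (R[[z]])^n consisting of those elements all of whose coefficients lie in a submodule M of R^n. If M is generated by f₁, …, f_m ∈ R^n, then every element of M₁ is an R[[z]]-linear combination of f₁, …, f_m (viewed as constant power series). -/
/-- If `M ≤ R^n` is generated by `f₁, …, f_m`, then every formal power series in `(R[[z]])^n`
all of whose coefficients lie in `M` is an `R[[z]]`-linear combination of the `f_k`
viewed as constant power series. -/
theorem powerSeries_module_span (R : Type*) [CommRing R] (n m : ℕ)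
    (f : Fin m → (Fin n → R)) (M : Submodule R (Fin n → R))
    (hM : M = Submodule.span R (Set.range f))
    (F : Fin n → PowerSeries R)
    (hF : ∀ i : ℕ, (fun j => PowerSeries.coeff (R := R) i (F j)) ∈ M) :
    F ∈ Submodule.span (PowerSeries R)
      (Set.range fun k => fun j => PowerSeries.C (R := R) (f k j)) := by
  subst hM
  have hc : ∀ i : ℕ, ∃ c : Fin m → R, ∑ k, c k • f k = fun j => PowerSeries.coeff (R := R) i (F j) := by
    intro i
    exact (Submodule.mem_span_range_iff_exists_fun (R := R)).mp (hF i)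
  choose c hcEq using hc
  have key : F = ∑ k, (PowerSeries.mk (fun i => c i k)) •
      (fun j => PowerSeries.C (R := R) (f k j)) := by
    funext j
    ext i
    have h := congrFun (hcEq i) j
    simp only [Finset.sum_apply, Pi.smul_apply, smul_eq_mul] at h ⊢
    rw [map_sum]
    rw [← h]
    apply Finset.sum_congr rfl
    intro k _
    simp [PowerSeries.coeff_mul_C]
  rw [key]
  exact Submodule.sum_smul_mem _ _ (fun k _ =>
    Submodule.subset_span (Set.mem_range_self k))
end

section
/- Let E, F be Banach spaces, π : E → F a continuous surjective linear map, Q ⊆ P an inclusion of compact Hausdorff spaces with Q closed in P, f : P → F continuous, and e : Q → E continuous with π ∘ e = f restricted to Q. Then e extends to a continuous map g : P → E with π ∘ g = f. -/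
open Set Filter Topology

/-- Weighted averages with nonnegative weights summing to one: a bound on the vectors at
indices with nonzero weight gives a bound on the average. -/
lemma cartan_pou_bound {G : Type*} [NormedAddCommGroup G] [NormedSpace ℝ G]
    {ι : Type*} [Fintype ι] (w : ι → ℝ) (hw : ∀ i, 0 ≤ w i) (hw1 : ∑ i, w i = 1)
    (v : ι → G) {ε : ℝ} (hv : ∀ i, w i ≠ 0 → ‖v i‖ ≤ ε) :
    ‖∑ i, w i • v i‖ ≤ ε := by
  calc ‖∑ i, w i • v i‖ ≤ ∑ i, w i * ε := by
        refine (norm_sum_le _ _).trans (Finset.sum_le_sum fun i _ => ?_)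
        rw [norm_smul, Real.norm_of_nonneg (hw i)]
        rcases eq_or_ne (w i) 0 with h | h
        · simp [h]
        · exact mul_le_mul_of_nonneg_left (hv i h) (hw i)
    _ = ε := by rw [← Finset.sum_mul, hw1, one_mul]

/-- The key approximation step in Cartan's lifting lemma. -/
lemma cartan_approx {E F P : Type*} [NormedAddCommGroup E] [NormedSpace ℝ E]
    [NormedAddCommGroup F] [NormedSpace ℝ F]
    [TopologicalSpace P] [CompactSpace P] [T2Space P]
    (π : E →L[ℝ] F) {C : ℝ} (hC : 0 ≤ C)
    (hσ : ∀ y : F, ∃ x, π x = y ∧ ‖x‖ ≤ C * ‖y‖)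
    (Q : Set P) (hQ : IsClosed Q) [CompactSpace Q]
    (h : C(P, F)) (d : C(Q, E)) (hcomp : ∀ q : Q, π (d q) = h ↑q)
    {ε : ℝ} (hε : 0 < ε) :
    ∃ g : C(P, E), ‖g‖ ≤ C * ‖h‖ + ‖d‖ ∧ (∀ p : P, ‖π (g p) - h p‖ ≤ ε) ∧
      ∀ q : Q, ‖g ↑q - d q‖ ≤ ε := by
  classical
  set M : ℝ := C * ‖h‖ + ‖d‖ with hM
  have hM0 : 0 ≤ M := by positivity
  -- pointwise lifts
  let x : P → E := fun p => if hp : p ∈ Q then d ⟨p, hp⟩ else Classical.choose (hσ (h p))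
  have hx1 : ∀ p, π (x p) = h p := by
    intro p
    by_cases hp : p ∈ Q
    · simp only [x, dif_pos hp]
      exact hcomp ⟨p, hp⟩
    · simp only [x, dif_neg hp]
      exact (Classical.choose_spec (hσ (h p))).1
  have hx2 : ∀ p, ‖x p‖ ≤ M := by
    intro p
    by_cases hp : p ∈ Q
    · simp only [x, dif_pos hp]
      have : ‖d ⟨p, hp⟩‖ ≤ ‖d‖ := d.norm_coe_le_norm _
      nlinarith [norm_nonneg h]
    · simp only [x, dif_neg hp]
      have h1 := (Classical.choose_spec (hσ (h p))).2
      have h2 : ‖h p‖ ≤ ‖h‖ := h.norm_coe_le_norm p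
      nlinarith [norm_nonneg d]
  have hx3 : ∀ (p : P) (hp : p ∈ Q), x p = d ⟨p, hp⟩ := fun p hp => by
    simp only [x, dif_pos hp]
  -- good neighborhoods
  have hU : ∀ p : P, ∃ U : Set P, IsOpen U ∧ p ∈ U ∧ (∀ p' ∈ U, ‖h p' - h p‖ < ε) ∧
      (∀ q' : Q, (q' : P) ∈ U → ‖x ↑q' - x p‖ < ε) := by
    intro p
    have hA : IsOpen {p' : P | ‖h p' - h p‖ < ε} := by
      have : Continuous fun p' : P => ‖h p' - h p‖ := (h.continuous.sub continuous_const).norm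
      exact isOpen_lt this continuous_const
    by_cases hp : p ∈ Q
    · -- use continuity of d at p
      have hW : IsOpen {q' : Q | ‖d q' - d ⟨p, hp⟩‖ < ε} := by
        have : Continuous fun q' : Q => ‖d q' - d ⟨p, hp⟩‖ :=
          (d.continuous.sub continuous_const).norm
        exact isOpen_lt this continuous_const
      obtain ⟨V, hVo, hVW⟩ := isOpen_induced_iff.mp hW
      refine ⟨{p' : P | ‖h p' - h p‖ < ε} ∩ V, hA.inter hVo, ⟨by simp [hε], ?_⟩, ?_, ?_⟩
      · have : (⟨p, hp⟩ : Q) ∈ {q' : Q | ‖d q' - d ⟨p, hp⟩‖ < ε} := by simp [hε]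
        rw [← hVW] at this
        exact this
      · exact fun p' hp' => hp'.1
      · intro q' hq'
        have : q' ∈ (Subtype.val ⁻¹' V : Set Q) := hq'.2
        rw [hVW] at this
        rw [hx3 ↑q' q'.2, hx3 p hp]
        simpa using this
    · refine ⟨{p' : P | ‖h p' - h p‖ < ε} ∩ Qᶜ, hA.inter hQ.isOpen_compl,
        ⟨by simp [hε], hp⟩, fun p' hp' => hp'.1, ?_⟩
      intro q' hq'
      exact absurd q'.2 hq'.2
  choose U hUo hUp hUh hUx using hU
  -- finite subcover and partition of unity
  obtain ⟨t, ht⟩ := isCompact_univ.elim_finite_subcover U hUo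
    (fun p _ => mem_iUnion.2 ⟨p, hUp p⟩)
  obtain ⟨ρ, hρ⟩ := PartitionOfUnity.exists_isSubordinate (ι := t) isClosed_univ
    (fun i => U ↑i) (fun i => hUo ↑i) (by
      intro p _
      obtain ⟨q, hq, hpq⟩ := mem_iUnion₂.mp (ht (mem_univ p))
      exact mem_iUnion.2 ⟨⟨q, hq⟩, hpq⟩)
  have hsum1 : ∀ p : P, ∑ i : t, ρ i p = 1 := by
    intro p
    have := ρ.sum_eq_one (mem_univ p)
    rwa [finsum_eq_sum_of_fintype] at this
  have hsupp : ∀ (i : t) (p : P), ρ i p ≠ 0 → p ∈ U ↑i := fun i p hne =>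
    hρ i (subset_tsupport _ (by simpa using hne))
  -- the approximate lift
  refine ⟨⟨fun p => ∑ i : t, ρ i p • x ↑i, ?_⟩, ?_, ?_, ?_⟩
  · exact continuous_finset_sum _ fun i _ => ((ρ i).continuous).smul continuous_const
  · rw [ContinuousMap.norm_le _ hM0]
    intro p
    simpa using cartan_pou_bound (fun i : t => ρ i p) (fun i => ρ.nonneg i p) (hsum1 p)
      (fun i : t => x ↑i) (fun i _ => hx2 ↑i)
  · intro p
    have heq : π (∑ i : t, ρ i p • x ↑i) - h p = ∑ i : t, ρ i p • (h ↑i - h p) := by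
      rw [map_sum]
      simp only [map_smul, hx1, smul_sub, Finset.sum_sub_distrib, ← Finset.sum_smul, hsum1,
        one_smul]
    rw [ContinuousMap.coe_mk, heq]
    refine cartan_pou_bound _ (fun i => ρ.nonneg i p) (hsum1 p) _ fun i hne => ?_
    rw [norm_sub_rev]
    exact (hUh ↑i p (hsupp i p hne)).le
  · intro q
    have heq : (∑ i : t, ρ i ↑q • x ↑i) - d q = ∑ i : t, ρ i ↑q • (x ↑i - d q) := by
      simp only [smul_sub, Finset.sum_sub_distrib, ← Finset.sum_smul, hsum1, one_smul]
    rw [ContinuousMap.coe_mk, heq]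
    refine cartan_pou_bound _ (fun i => ρ.nonneg i ↑q) (hsum1 ↑q) _ fun i hne => ?_
    have hmem := hsupp i ↑q hne
    have := hUx ↑i q hmem
    rw [hx3 ↑q q.2] at this
    rw [norm_sub_rev]
    simpa using this.le

/-- One step of the iterative construction: halving the defect. -/
lemma cartan_step {E F P : Type*} [NormedAddCommGroup E] [NormedSpace ℝ E]
    [NormedAddCommGroup F] [NormedSpace ℝ F]
    [TopologicalSpace P] [CompactSpace P] [T2Space P]
    (π : E →L[ℝ] F) {C : ℝ} (hC : 0 ≤ C)
    (hσ : ∀ y : F, ∃ x, π x = y ∧ ‖x‖ ≤ C * ‖y‖)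
    (Q : Set P) (hQ : IsClosed Q) [CompactSpace Q]
    (h : C(P, F)) (d : C(Q, E)) (hcomp : ∀ q : Q, π (d q) = h ↑q) :
    ∃ g : C(P, E), ‖g‖ ≤ (C + 1) * (‖h‖ + ‖d‖) ∧
      ‖h - (ContinuousMap.mk π π.continuous).comp g‖ ≤ (‖h‖ + ‖d‖) / 4 ∧
      ‖d - g.restrict Q‖ ≤ (‖h‖ + ‖d‖) / 4 := by
  by_cases hz : 0 < ‖h‖ + ‖d‖
  · obtain ⟨g, hg1, hg2, hg3⟩ := cartan_approx π hC hσ Q hQ h d hcomp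
      (ε := (‖h‖ + ‖d‖) / 4) (by positivity)
    refine ⟨g, hg1.trans (by nlinarith [norm_nonneg h, norm_nonneg d]), ?_, ?_⟩
    · rw [ContinuousMap.norm_le _ (by positivity)]
      intro p
      simp only [ContinuousMap.sub_apply, ContinuousMap.comp_apply, ContinuousMap.coe_mk]
      rw [norm_sub_rev]
      exact hg2 p
    · rw [ContinuousMap.norm_le _ (by positivity)]
      intro q
      simp only [ContinuousMap.sub_apply, ContinuousMap.restrict_apply]
      rw [norm_sub_rev]
      exact hg3 q
  · have h1 : ‖h‖ = 0 ∧ ‖d‖ = 0 := by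
      constructor <;> nlinarith [norm_nonneg h, norm_nonneg d]
    have hh : h = 0 := norm_eq_zero.mp h1.1
    have hd : d = 0 := norm_eq_zero.mp h1.2
    refine ⟨0, ?_, ?_, ?_⟩
    · simp [hh, hd]
    · have : (ContinuousMap.mk π π.continuous).comp (0 : C(P, E)) = 0 := by
        ext p; simp
      rw [hh, this]
      simp
      positivity
    · have : (0 : C(P, E)).restrict Q = 0 := by ext q; simp
      rw [hd, this]
      simp
      positivity

/-- Cartan's lemma: a continuous partial lift on a closed subset `Q` of a compact Hausdorff
space `P` extends to a continuous global lift through a surjective continuous linear map. -/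
theorem cartan_lifting_lemma (E F : Type*)
    [NormedAddCommGroup E] [NormedSpace ℝ E] [CompleteSpace E]
    [NormedAddCommGroup F] [NormedSpace ℝ F] [CompleteSpace F]
    (π : E →L[ℝ] F) (hπ : Function.Surjective π)
    (P : Type*) [TopologicalSpace P] [CompactSpace P] [T2Space P]
    (Q : Set P) (hQ : IsClosed Q)
    (f : C(P, F)) (e : C(Q, E)) (he : ∀ q : Q, π (e q) = f q) :
    ∃ g : C(P, E), (∀ p : P, π (g p) = f p) ∧ ∀ q : Q, g q = e q := by
  classical
  haveI : CompactSpace Q := isCompact_iff_compactSpace.mp hQ.isCompact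
  obtain ⟨σ, -⟩ := π.exists_nonlinearRightInverse_of_surjective (LinearMap.range_eq_top.mpr hπ)
  have hC : (0 : ℝ) ≤ (σ.nnnorm : ℝ) := σ.nnnorm.coe_nonneg
  have hσ : ∀ y : F, ∃ x, π x = y ∧ ‖x‖ ≤ (σ.nnnorm : ℝ) * ‖y‖ := fun y =>
    ⟨σ y, σ.right_inv y, σ.bound y⟩
  set C : ℝ := (σ.nnnorm : ℝ) with hCdef
  choose G hG1 hG2 hG3 using fun (h : C(P, F)) (d : C(Q, E))
    (hc : ∀ q : Q, π (d q) = h ↑q) => cartan_step π hC hσ Q hQ h d hc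
  have hcomp' : ∀ (h : C(P, F)) (d : C(Q, E)) (hc : ∀ q : Q, π (d q) = h ↑q) (q : Q),
      π ((d - (G h d hc).restrict Q) q) =
        (h - (ContinuousMap.mk π π.continuous).comp (G h d hc)) ↑q := by
    intro h d hc q
    simp [hc q]
  let Z := {z : C(P, F) × C(Q, E) // ∀ q : Q, π (z.2 q) = z.1 ↑q}
  let nextZ : Z → Z := fun z =>
    ⟨(z.1.1 - (ContinuousMap.mk π π.continuous).comp (G z.1.1 z.1.2 z.2),
      z.1.2 - (G z.1.1 z.1.2 z.2).restrict Q), hcomp' z.1.1 z.1.2 z.2⟩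
  let seq : ℕ → Z := fun n => nextZ^[n] ⟨(f, e), he⟩
  let gs : ℕ → C(P, E) := fun n => G (seq n).1.1 (seq n).1.2 (seq n).2
  have hs1 : ∀ n, (seq (n + 1)).1.1 =
      (seq n).1.1 - (ContinuousMap.mk π π.continuous).comp (gs n) := by
    intro n
    rw [show seq (n + 1) = nextZ (seq n) from Function.iterate_succ_apply' _ _ _]
  have hs2 : ∀ n, (seq (n + 1)).1.2 = (seq n).1.2 - (gs n).restrict Q := by
    intro n
    rw [show seq (n + 1) = nextZ (seq n) from Function.iterate_succ_apply' _ _ _]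
  have hdecay : ∀ n, ‖(seq n).1.1‖ + ‖(seq n).1.2‖ ≤ (‖f‖ + ‖e‖) / 2 ^ n := by
    intro n
    induction n with
    | zero => simp [seq]
    | succ n ih =>
      have h2 := hG2 (seq n).1.1 (seq n).1.2 (seq n).2
      have h3 := hG3 (seq n).1.1 (seq n).1.2 (seq n).2
      have hpow : (‖f‖ + ‖e‖) / 2 ^ (n + 1) = (‖f‖ + ‖e‖) / 2 ^ n / 2 := by
        rw [pow_succ]; ring
      rw [hs1 n, hs2 n, hpow]
      linarith
  have hgb : ∀ n, ‖gs n‖ ≤ ((C + 1) * (‖f‖ + ‖e‖)) * (1 / 2) ^ n := by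
    intro n
    have h1 := hG1 (seq n).1.1 (seq n).1.2 (seq n).2
    have h2 := hdecay n
    have h3 : (C + 1) * (‖(seq n).1.1‖ + ‖(seq n).1.2‖) ≤ (C + 1) * ((‖f‖ + ‖e‖) / 2 ^ n) :=
      mul_le_mul_of_nonneg_left h2 (by linarith)
    have h4 : ((1 : ℝ) / 2) ^ n = ((2 : ℝ) ^ n)⁻¹ := by rw [one_div, inv_pow]
    rw [h4]
    calc ‖gs n‖ ≤ (C + 1) * ((‖f‖ + ‖e‖) / 2 ^ n) := h1.trans h3
      _ = (C + 1) * (‖f‖ + ‖e‖) * (2 ^ n)⁻¹ := by rw [div_eq_mul_inv]; ring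
  have hsum : Summable gs :=
    Summable.of_norm_bounded (summable_geometric_two.mul_left _) hgb
  refine ⟨∑' n, gs n, ?_, ?_⟩
  · intro p
    have heval : HasSum (fun n => gs n p) ((∑' n, gs n) p) :=
      (ContinuousMap.evalCLM ℝ p).hasSum hsum.hasSum
    have hps : HasSum (fun n => π (gs n p)) (π ((∑' n, gs n) p)) := π.hasSum heval
    have hH : ∀ n, π (gs n p) = (seq n).1.1 p - (seq (n + 1)).1.1 p := by
      intro n
      rw [hs1 n]
      simp
    have htend := hps.tendsto_sum_nat
    have hzero : Tendsto (fun n => (seq n).1.1 p) atTop (𝓝 0) := by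
      apply squeeze_zero_norm (a := fun n => (‖f‖ + ‖e‖) / 2 ^ n)
      · intro n
        exact ((seq n).1.1.norm_coe_le_norm p).trans
          (le_trans (le_add_of_nonneg_right (norm_nonneg _)) (hdecay n))
      · have h5 := (tendsto_pow_atTop_nhds_zero_of_lt_one
          (by norm_num : (0:ℝ) ≤ 1 / 2) (by norm_num : (1:ℝ) / 2 < 1)).const_mul (‖f‖ + ‖e‖)
        rw [mul_zero] at h5
        convert h5 using 2 with n
        rw [div_eq_mul_inv, one_div, inv_pow]
      --
    have htele : Tendsto (fun n => ∑ i ∈ Finset.range n, π (gs i p)) atTop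
        (𝓝 ((seq 0).1.1 p)) := by
      have : ∀ n, ∑ i ∈ Finset.range n, π (gs i p) = (seq 0).1.1 p - (seq n).1.1 p := by
        intro n
        simp only [hH]
        exact Finset.sum_range_sub' (fun i => (seq i).1.1 p) n
      simp only [this]
      simpa using tendsto_const_nhds.sub hzero
    have := tendsto_nhds_unique htend htele
    rw [this]
    rfl
  · intro q
    have heval : HasSum (fun n => gs n ↑q) ((∑' n, gs n) ↑q) :=
      (ContinuousMap.evalCLM ℝ (↑q : P)).hasSum hsum.hasSum
    have hH : ∀ n, gs n ↑q = (seq n).1.2 q - (seq (n + 1)).1.2 q := by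
      intro n
      rw [hs2 n]
      simp
    have htend := heval.tendsto_sum_nat
    have hzero : Tendsto (fun n => (seq n).1.2 q) atTop (𝓝 0) := by
      apply squeeze_zero_norm (a := fun n => (‖f‖ + ‖e‖) / 2 ^ n)
      · intro n
        exact ((seq n).1.2.norm_coe_le_norm q).trans
          (le_trans (le_add_of_nonneg_left (norm_nonneg _)) (hdecay n))
      · have h5 := (tendsto_pow_atTop_nhds_zero_of_lt_one
          (by norm_num : (0:ℝ) ≤ 1 / 2) (by norm_num : (1:ℝ) / 2 < 1)).const_mul (‖f‖ + ‖e‖)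
        rw [mul_zero] at h5
        convert h5 using 2 with n
        rw [div_eq_mul_inv, one_div, inv_pow]
    have htele : Tendsto (fun n => ∑ i ∈ Finset.range n, gs i ↑q) atTop
        (𝓝 ((seq 0).1.2 q)) := by
      have : ∀ n, ∑ i ∈ Finset.range n, gs i ↑q = (seq 0).1.2 q - (seq n).1.2 q := by
        intro n
        simp only [hH]
        exact Finset.sum_range_sub' (fun i => (seq i).1.2 q) n
      simp only [this]
      simpa using tendsto_const_nhds.sub hzero
    have := tendsto_nhds_unique htend htele
    rw [this]
    rfl
end

section
/- Let V be a ℂ-vector space of holomorphic maps Δ^l → ℂ^n closed under the O(Δ^l)-module structure, and let M(Δ^l) be a closed O(Δ^l)-submodule. If f : Δ^l × Δ → ℂ^n is holomorphic with f(·, z) ∈ M(Δ^l) for every fixed z ∈ Δ, then each Taylor coefficient g_i in the expansion f(x, z) = Σ_{i≥0} z^i g_i(x) lies in M(Δ^l). -/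
open Metric Filter Finset

/-- Cauchy estimate: if `F` is holomorphic on the unit ball with power series
coefficients `a`, and `‖F‖ ≤ C` on the closed ball of radius `1/2`, then
`‖a m‖ ≤ C * 2 ^ m`. -/
lemma taylor_coeff_bound {n : ℕ} (F : ℂ → (Fin n → ℂ)) (a : ℕ → (Fin n → ℂ)) (C : ℝ)
    (hF : DifferentiableOn ℂ F (Metric.ball (0:ℂ) 1))
    (hsum : ∀ z ∈ Metric.ball (0:ℂ) 1, HasSum (fun m => z ^ m • a m) (F z))
    (hC : ∀ z ∈ Metric.closedBall (0:ℂ) (1/2), ‖F z‖ ≤ C) :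
    ∀ m, ‖a m‖ ≤ C * 2 ^ m := by
  have h12 : ((1/2 : NNReal) : ℝ) = (1/2 : ℝ) := by norm_num
  have hd : DifferentiableOn ℂ F (Metric.closedBall 0 ((1/2 : NNReal) : ℝ)) := by
    apply hF.mono
    rw [h12]
    exact Metric.closedBall_subset_ball (by norm_num)
  have hcb := hd.hasFPowerSeriesOnBall (R := 1/2) (by norm_num)
  set p : FormalMultilinearSeries ℂ ℂ (Fin n → ℂ) :=
    fun m => ContinuousMultilinearMap.mkPiRing ℂ (Fin m) (a m) with hp_def
  have hpnorm : ∀ m, ‖p m‖ = ‖a m‖ := fun m => ContinuousMultilinearMap.norm_mkPiRing _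
  have hsum34 : Summable (fun m => ‖p m‖ * ((3/4 : NNReal) : ℝ) ^ m) := by
    have hz : (((3/4 : ℝ)) : ℂ) ∈ Metric.ball (0:ℂ) 1 := by
      rw [mem_ball_zero_iff, Complex.norm_real]
      rw [Real.norm_eq_abs]; rw [abs_of_nonneg (by norm_num)]; norm_num
    have h2 := summable_norm_iff.mpr (hsum _ hz).summable
    apply h2.congr
    intro m
    rw [norm_smul, norm_pow, Complex.norm_real, hpnorm]
    rw [Real.norm_eq_abs, abs_of_nonneg (by norm_num : (0:ℝ) ≤ 3/4)]
    rw [mul_comm]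
    norm_num
  have hrad : ((1/2 : NNReal) : ENNReal) ≤ p.radius :=
    le_trans (ENNReal.coe_le_coe.mpr (NNReal.coe_le_coe.mp
        (by norm_num : ((1/2 : NNReal) : ℝ) ≤ ((3/4 : NNReal) : ℝ))))
      (p.le_radius_of_summable_norm hsum34)
  have hp : HasFPowerSeriesOnBall F p 0 ((1/2 : NNReal) : ENNReal) := by
    refine ⟨hrad, by norm_num, ?_⟩
    intro y hy
    rw [mem_emetric_ball_zero_iff] at hy
    have hy1 : y ∈ Metric.ball (0:ℂ) 1 := by
      rw [mem_ball_zero_iff]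
      have : (‖y‖₊ : ℝ) < ((1/2 : NNReal) : ℝ) := by exact_mod_cast hy
      rw [h12] at this
      calc ‖y‖ = (‖y‖₊ : ℝ) := by simp
        _ < 1/2 := this
        _ < 1 := by norm_num
    have := hsum y hy1
    simp only [hp_def, ContinuousMultilinearMap.mkPiRing_apply, Finset.prod_const,
      Finset.card_univ, Fintype.card_fin, zero_add]
    exact this
  have peq : p = cauchyPowerSeries F 0 ((1/2 : NNReal) : ℝ) :=
    hp.hasFPowerSeriesAt.eq_formalMultilinearSeries hcb.hasFPowerSeriesAt
  have hC0 : 0 ≤ C := le_trans (norm_nonneg (F 0)) (hC 0 (by simp))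
  have hball : ∀ θ : ℝ, circleMap 0 ((1/2 : NNReal) : ℝ) θ ∈ Metric.ball (0:ℂ) 1 := by
    intro θ
    rw [mem_ball_zero_iff, norm_circleMap_zero, h12]
    rw [abs_of_nonneg (by norm_num)]; norm_num
  have hcball : ∀ θ : ℝ, circleMap 0 ((1/2 : NNReal) : ℝ) θ ∈ Metric.closedBall (0:ℂ) (1/2) := by
    intro θ
    rw [Metric.mem_closedBall, dist_zero_right, norm_circleMap_zero, h12]
    rw [abs_of_nonneg (by norm_num)]
  have hFcont : Continuous fun θ : ℝ => ‖F (circleMap 0 ((1/2 : NNReal) : ℝ) θ)‖ := by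
    apply Continuous.norm
    exact hF.continuousOn.comp_continuous (continuous_circleMap 0 _) hball
  have hint : (∫ θ : ℝ in (0)..2 * Real.pi, ‖F (circleMap 0 ((1/2 : NNReal) : ℝ) θ)‖)
      ≤ 2 * Real.pi * C := by
    have := intervalIntegral.integral_mono_on (μ := MeasureTheory.volume)
      Real.two_pi_pos.le (hFcont.intervalIntegrable _ _)
      (intervalIntegrable_const (c := C)) (fun θ _ => hC _ (hcball θ))
    simpa using this
  intro m
  have habs : |((1/2 : NNReal) : ℝ)|⁻¹ = 2 := by
    rw [h12, abs_of_nonneg (by norm_num : (0:ℝ) ≤ 1/2)]; norm_num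
  calc ‖a m‖ = ‖p m‖ := (hpnorm m).symm
    _ = ‖cauchyPowerSeries F 0 ((1/2 : NNReal) : ℝ) m‖ := by rw [peq]
    _ ≤ ((2 * Real.pi)⁻¹ * ∫ θ : ℝ in (0)..2 * Real.pi,
          ‖F (circleMap 0 ((1/2 : NNReal) : ℝ) θ)‖) * |((1/2 : NNReal) : ℝ)|⁻¹ ^ m :=
        norm_cauchyPowerSeries_le _ _ _ _
    _ ≤ ((2 * Real.pi)⁻¹ * (2 * Real.pi * C)) * |((1/2 : NNReal) : ℝ)|⁻¹ ^ m := by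
        gcongr
    _ = C * 2 ^ m := by
        rw [habs]
        have hpi : (2 * Real.pi) ≠ 0 := by positivity
        field_simp
  done

/-- If `f : Δ^l × Δ → ℂ^n` is holomorphic with `f(·, z)` lying in a closed
`O(Δ^l)`-submodule `M` for every fixed `z`, then every Taylor coefficient (in `z`)
of `f` lies in `M`. -/
theorem taylor_coeffs_in_closed_submodule (l n : ℕ)
    (D : Set (Fin l → ℂ)) (hD : D = {x | ∀ i, ‖x i‖ < 1})
    (M : Set ((Fin l → ℂ) → (Fin n → ℂ)))
    (hadd : ∀ u ∈ M, ∀ v ∈ M, u + v ∈ M)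
    (hsmul : ∀ h : (Fin l → ℂ) → ℂ, DifferentiableOn ℂ h D →
      ∀ u ∈ M, (fun x => h x • u x) ∈ M)
    (hclosed : ∀ (φ : ℕ → (Fin l → ℂ) → (Fin n → ℂ)) (ψ : (Fin l → ℂ) → Fin n → ℂ),
      (∀ j, φ j ∈ M) → TendstoLocallyUniformlyOn φ ψ Filter.atTop D → ψ ∈ M)
    (f : (Fin l → ℂ) × ℂ → (Fin n → ℂ))
    (hf : DifferentiableOn ℂ f (D ×ˢ Metric.ball (0 : ℂ) 1))
    (hfM : ∀ z ∈ Metric.ball (0 : ℂ) 1, (fun x => f (x, z)) ∈ M)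
    (g : ℕ → (Fin l → ℂ) → (Fin n → ℂ))
    (hg : ∀ x ∈ D, ∀ z ∈ Metric.ball (0 : ℂ) 1,
      HasSum (fun i => z ^ i • g i x) (f (x, z))) :
    ∀ i, g i ∈ M := by
  -- `D` is open
  have hDopen : IsOpen D := by
    rw [hD]
    have : {x : Fin l → ℂ | ∀ i, ‖x i‖ < 1} = Set.pi Set.univ (fun _ => Metric.ball (0:ℂ) 1) := by
      ext x; simp [Set.mem_pi, mem_ball_zero_iff]
    rw [this]
    exact isOpen_set_pi Set.finite_univ (fun _ _ => Metric.isOpen_ball)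
  -- uniform Cauchy estimates on compact subsets of `D`
  have key : ∀ K ⊆ D, IsCompact K → ∃ C : ℝ, 0 ≤ C ∧ ∀ x ∈ K, ∀ m, ‖g m x‖ ≤ C * 2 ^ m := by
    intro K hKD hK
    have hK' : IsCompact (K ×ˢ Metric.closedBall (0:ℂ) (1/2)) :=
      hK.prod (isCompact_closedBall _ _)
    have hsub : K ×ˢ Metric.closedBall (0:ℂ) (1/2) ⊆ D ×ˢ Metric.ball (0:ℂ) 1 :=
      Set.prod_mono hKD (Metric.closedBall_subset_ball (by norm_num))
    obtain ⟨C0, hC0⟩ := hK'.exists_bound_of_continuousOn (hf.continuousOn.mono hsub)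
    refine ⟨max C0 0, le_max_right _ _, ?_⟩
    intro x hx
    have hxD : x ∈ D := hKD hx
    have hmap : Set.MapsTo (fun z : ℂ => (x, z)) (Metric.ball (0:ℂ) 1)
        (D ×ˢ Metric.ball (0:ℂ) 1) := fun z hz => ⟨hxD, hz⟩
    have hF : DifferentiableOn ℂ (fun z : ℂ => f (x, z)) (Metric.ball (0:ℂ) 1) :=
      hf.comp (((differentiable_const x).prodMk differentiable_id).differentiableOn) hmap
    exact taylor_coeff_bound (fun z => f (x, z)) (fun m => g m x) (max C0 0) hF
      (fun z hz => hg x hxD z hz)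
      (fun z hz => le_trans (hC0 (x, z) ⟨hx, hz⟩) (le_max_left _ _))
  -- strong induction on the coefficient index
  intro i
  induction i using Nat.strong_induction_on with
  | _ i IH =>
  -- the sequence of points `zc j → 0`
  set zc : ℕ → ℂ := fun j => ((((j:ℝ) + 3)⁻¹ : ℝ) : ℂ) with hzc_def
  have hjpos : ∀ j : ℕ, (0:ℝ) < (j:ℝ) + 3 := fun j => by positivity
  have hznorm : ∀ j, ‖zc j‖ = ((j:ℝ) + 3)⁻¹ := by
    intro j
    rw [hzc_def]
    rw [Complex.norm_real, Real.norm_eq_abs, abs_of_nonneg (by positivity)]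
  have hj3 : ∀ j : ℕ, (3:ℝ) ≤ (j:ℝ) + 3 := by
    intro j
    have : (0:ℝ) ≤ (j:ℝ) := Nat.cast_nonneg j
    linarith
  have hzle : ∀ j, ‖zc j‖ ≤ 1/3 := by
    intro j
    rw [hznorm]
    calc ((j:ℝ) + 3)⁻¹ ≤ (3:ℝ)⁻¹ := inv_anti₀ (by norm_num) (hj3 j)
      _ = 1/3 := by norm_num
  have hzball : ∀ j, zc j ∈ Metric.ball (0:ℂ) 1 := by
    intro j
    rw [mem_ball_zero_iff]
    linarith [hzle j]
  have hzne : ∀ j, zc j ≠ 0 := by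
    intro j
    rw [hzc_def]
    simp only [ne_eq, Complex.ofReal_eq_zero]
    positivity
  -- the approximating functions
  set u : ℕ → (Fin l → ℂ) → (Fin n → ℂ) := fun j x =>
    ((zc j) ^ i)⁻¹ • (f (x, zc j) - ∑ k ∈ Finset.range i, (zc j) ^ k • g k x) with hu_def
  -- each `u j` belongs to `M`
  have hu : ∀ j, u j ∈ M := by
    intro j
    apply hsmul (fun _ => ((zc j) ^ i)⁻¹) (differentiableOn_const _)
    have : ∀ m, m ≤ i →
        (fun x => f (x, zc j) - ∑ k ∈ Finset.range m, (zc j) ^ k • g k x) ∈ M := by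
      intro m
      induction m with
      | zero => intro _; simpa using hfM (zc j) (hzball j)
      | succ m ih =>
        intro hmi
        have h1 := ih (le_trans (Nat.le_succ m) hmi)
        have h2 : g m ∈ M := IH m (lt_of_lt_of_le (Nat.lt_succ_self m) hmi)
        have heq : (fun x => f (x, zc j) - ∑ k ∈ Finset.range (m+1), (zc j) ^ k • g k x)
            = fun x => (f (x, zc j) - ∑ k ∈ Finset.range m, (zc j) ^ k • g k x)
              + (-((zc j) ^ m)) • g m x := by
          funext x
          rw [Finset.sum_range_succ]
          module
        rw [heq]
        exact hadd _ h1 _ (hsmul (fun _ => -((zc j) ^ m)) (differentiableOn_const _) _ h2)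
    exact this i le_rfl
  -- the key `HasSum` identity
  have hS : ∀ j, ∀ x ∈ D, HasSum (fun m => (zc j) ^ (m+1) • g (m+1+i) x) (u j x - g i x) := by
    intro j x hx
    have hS1 := hg x hx (zc j) (hzball j)
    have hS2 := (hasSum_nat_add_iff' (f := fun m => (zc j) ^ m • g m x) i).mpr hS1
    have hS3 := hS2.const_smul (((zc j) ^ i)⁻¹)
    have heq : (fun m => ((zc j) ^ i)⁻¹ • (zc j) ^ (m+i) • g (m+i) x)
        = fun m => (zc j) ^ m • g (m+i) x := by
      funext m
      rw [smul_smul]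
      congr 1
      rw [pow_add, mul_comm ((zc j)^m), ← mul_assoc, inv_mul_cancel₀ (pow_ne_zero i (hzne j)),
        one_mul]
    rw [heq] at hS3
    have hS4 : HasSum (fun m => (zc j) ^ m • g (m+i) x) (u j x) := hS3
    have hS5 := (hasSum_nat_add_iff' (f := fun m => (zc j) ^ m • g (m+i) x) 1).mpr hS4
    simpa using hS5
  -- conclusion via closedness
  apply hclosed u (g i) hu
  rw [tendstoLocallyUniformlyOn_iff_forall_isCompact hDopen]
  intro K hKD hK
  obtain ⟨C, hC0, hCb⟩ := key K hKD hK
  rw [Metric.tendstoUniformlyOn_iff]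
  intro ε hε
  have htend : Tendsto (fun j : ℕ => 6 * C * 2 ^ i * ((j:ℝ) + 3)⁻¹) atTop (nhds 0) := by
    have h1 : Tendsto (fun j : ℕ => ((j:ℝ) + 3)) atTop atTop :=
      tendsto_atTop_add_const_right _ 3 tendsto_natCast_atTop_atTop
    have h2 := tendsto_inv_atTop_zero.comp h1
    have h3 := h2.const_mul (6 * C * 2 ^ i)
    simpa using h3
  filter_upwards [htend.eventually_lt_const hε] with j hj
  intro x hx
  set r : ℝ := ((j:ℝ) + 3)⁻¹ with hr_def
  have hr0 : 0 < r := by positivity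
  have hr13 : r ≤ 1/3 := by
    rw [hr_def]
    calc ((j:ℝ) + 3)⁻¹ ≤ (3:ℝ)⁻¹ := inv_anti₀ (by norm_num) (hj3 j)
      _ = 1/3 := by norm_num
  have h2r0 : (0:ℝ) ≤ 2 * r := by linarith
  have h2r1 : 2 * r < 1 := by linarith
  have hgeo := (hasSum_geometric_of_lt_one h2r0 h2r1).mul_left (C * 2 ^ i * (2 * r))
  have hxD : x ∈ D := hKD hx
  have hbound : ∀ m : ℕ, ‖(zc j) ^ (m+1) • g (m+1+i) x‖
      ≤ (C * 2 ^ i * (2 * r)) * (2 * r) ^ m := by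
    intro m
    rw [norm_smul, norm_pow, hznorm]
    calc r ^ (m+1) * ‖g (m+1+i) x‖ ≤ r ^ (m+1) * (C * 2 ^ (m+1+i)) := by
          apply mul_le_mul_of_nonneg_left (hCb x hx (m+1+i)) (by positivity)
      _ = (C * 2 ^ i * (2 * r)) * (2 * r) ^ m := by
          rw [pow_add, pow_add, mul_pow]
          ring
  have hsumnorm : Summable (fun m => ‖(zc j) ^ (m+1) • g (m+1+i) x‖) :=
    Summable.of_nonneg_of_le (fun _ => norm_nonneg _) hbound hgeo.summable
  have hnorm : ‖u j x - g i x‖ ≤ (C * 2 ^ i * (2 * r)) * (1 - 2 * r)⁻¹ := by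
    have hSx := hS j x hxD
    calc ‖u j x - g i x‖ = ‖∑' m, (zc j) ^ (m+1) • g (m+1+i) x‖ := by rw [hSx.tsum_eq]
      _ ≤ ∑' m, ‖(zc j) ^ (m+1) • g (m+1+i) x‖ := norm_tsum_le_tsum_norm hsumnorm
      _ ≤ ∑' m, (C * 2 ^ i * (2 * r)) * (2 * r) ^ m :=
          Summable.tsum_le_tsum hbound hsumnorm hgeo.summable
      _ = (C * 2 ^ i * (2 * r)) * (1 - 2 * r)⁻¹ := hgeo.tsum_eq
  have hinv3 : (1 - 2 * r)⁻¹ ≤ 3 := by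
    have h13 : (1:ℝ)/3 ≤ 1 - 2 * r := by linarith
    calc (1 - 2 * r)⁻¹ ≤ ((1:ℝ)/3)⁻¹ := inv_anti₀ (by norm_num) h13
      _ = 3 := by norm_num
  have hfinal : ‖u j x - g i x‖ ≤ 6 * C * 2 ^ i * r := by
    calc ‖u j x - g i x‖ ≤ (C * 2 ^ i * (2 * r)) * (1 - 2 * r)⁻¹ := hnorm
      _ ≤ (C * 2 ^ i * (2 * r)) * 3 := by
          apply mul_le_mul_of_nonneg_left hinv3 (by positivity)
      _ = 6 * C * 2 ^ i * r := by ring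
  rw [dist_eq_norm, norm_sub_rev]
  exact lt_of_le_of_lt hfinal hj
end

section
/- Let E, F be Fréchet spaces and π : E → F a continuous linear surjection. Then the induced map π_* : C(P, E) → C(P, F), g ↦ π ∘ g, on spaces of continuous maps from a compact metric space P (with sup-metric/compact-open topology) is a continuous linear surjection of Fréchet spaces, and hence open. -/
open Filter Set Topology Pointwise Uniformity

section Aux

/-- In a locally convex real TVS, every neighborhood of `0` contains a convex symmetric
neighborhood of `0`. -/
theorem exists_convex_symm_nhds {E : Type*} [AddCommGroup E] [Module ℝ E] [TopologicalSpace E]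
    [IsTopologicalAddGroup E] [LocallyConvexSpace ℝ E] {S : Set E} (hS : S ∈ 𝓝 (0 : E)) :
    ∃ V, (V ∈ 𝓝 (0 : E) ∧ Convex ℝ V ∧ V = -V) ∧ V ⊆ S := by
  obtain ⟨C, ⟨hC, hCc⟩, hCS⟩ := (LocallyConvexSpace.convex_basis_zero ℝ E).mem_iff.mp hS
  have hnegC : -C ∈ 𝓝 (0 : E) := by
    have h := (continuous_neg (G := E)).continuousAt (x := (0 : E))
    rw [ContinuousAt, neg_zero] at h
    exact h hC
  refine ⟨C ∩ -C, ⟨inter_mem hC hnegC, hCc.inter hCc.neg, ?_⟩, fun x hx => hCS hx.1⟩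
  ext x
  simp only [Set.mem_inter_iff, Set.mem_neg, neg_neg]
  tauto

/-- In a topological additive group, `closure S ⊆ S + N` for any symmetric
neighborhood `N` of `0`. -/
theorem closure_subset_add_of_symm {E : Type*} [AddCommGroup E] [TopologicalSpace E]
    [IsTopologicalAddGroup E] {S N : Set E} (hN : N ∈ 𝓝 (0 : E)) (hsym : N = -N) :
    closure S ⊆ S + N := by
  intro z hz
  have himg : (fun w => z + w) '' N ∈ 𝓝 z := by
    simpa using (Homeomorph.addLeft z).isOpenMap.image_mem_nhds hN
  obtain ⟨y, hy1, hy2⟩ := mem_closure_iff_nhds.mp hz _ himg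
  obtain ⟨n, hn, rfl⟩ := hy1
  have hnn : -n ∈ N := by rw [hsym]; simpa using hn
  exact ⟨z + n, hy2, -n, hnn, add_neg_cancel_right z n⟩

/-- Key "almost open" statement: for a continuous linear surjection `π : E → F` onto a
Fréchet space `F`, the closure of the image of any neighborhood of zero is a neighborhood
of zero. -/
theorem closure_image_mem_nhds {E F : Type*}
    [AddCommGroup E] [Module ℝ E] [TopologicalSpace E] [IsTopologicalAddGroup E]
    [ContinuousSMul ℝ E]
    [AddCommGroup F] [Module ℝ F] [UniformSpace F] [IsUniformAddGroup F]
    [ContinuousSMul ℝ F] [TopologicalSpace.MetrizableSpace F] [CompleteSpace F]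
    (π : E →L[ℝ] F) (hπ : Function.Surjective π)
    {U : Set E} (hU : U ∈ 𝓝 (0 : E)) : closure (π '' U) ∈ 𝓝 (0 : F) := by
  -- F is a Baire space
  haveI hcg : (𝓤 F).IsCountablyGenerated := by
    rw [uniformity_eq_comap_nhds_zero F]; infer_instance
  haveI hBaire : BaireSpace F := inferInstance
  -- a symmetric "half" neighborhood
  obtain ⟨V', hV', hV'h⟩ := exists_nhds_zero_half hU
  have hnegV' : -V' ∈ 𝓝 (0 : E) := by
    have h := (continuous_neg (G := E)).continuousAt (x := (0 : E))
    rw [ContinuousAt, neg_zero] at h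
    exact h hV'
  set V : Set E := V' ∩ -V' with hVdef
  have hV : V ∈ 𝓝 (0 : E) := inter_mem hV' hnegV'
  set A : Set F := closure (π '' V) with hAdef
  -- A is absorbing by surjectivity, so by Baire some dilate has interior
  have hcover : ⋃ n : ℕ, ((n : ℝ) + 1) • A = univ := by
    refine eq_univ_iff_forall.mpr fun y => ?_
    obtain ⟨x, rfl⟩ := hπ y
    have h1 : Filter.Tendsto (fun n : ℕ => (1 / ((n : ℝ) + 1)) • x) atTop (𝓝 ((0 : ℝ) • x)) :=
      tendsto_one_div_add_atTop_nhds_zero_nat.smul_const x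
    rw [zero_smul] at h1
    obtain ⟨n, hn⟩ := (h1.eventually_mem hV).exists
    refine mem_iUnion.mpr ⟨n, ?_⟩
    have hne : ((n : ℝ) + 1) ≠ 0 := by positivity
    have hx : x ∈ ((n : ℝ) + 1) • V := by
      refine ⟨(1 / ((n : ℝ) + 1)) • x, hn, ?_⟩
      show ((n : ℝ) + 1) • (1 / ((n : ℝ) + 1)) • x = x
      rw [smul_smul, mul_one_div_cancel hne, one_smul]
    have : π x ∈ ((n : ℝ) + 1) • (π '' V) := by
      rw [← image_smul_set]
      exact ⟨x, hx, rfl⟩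
    exact Set.smul_set_mono subset_closure this
  have hclosed : ∀ n : ℕ, IsClosed (((n : ℝ) + 1) • A) := fun n =>
    isClosed_closure.smul_of_ne_zero (by positivity)
  obtain ⟨n, y₀, hy₀⟩ := nonempty_interior_of_iUnion_of_closed hclosed hcover
  -- interior A is nonempty
  have hne : ((n : ℝ) + 1) ≠ 0 := by positivity
  rw [interior_smul₀ hne] at hy₀
  obtain ⟨a, ha, rfl⟩ := hy₀
  -- now 0 ∈ interior A - a ⊆ closure (π '' U)
  have hNopen : IsOpen ((fun w => w + a) ⁻¹' interior A) :=
    isOpen_interior.preimage (continuous_add_right a)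
  have hN0 : (0 : F) ∈ (fun w => w + a) ⁻¹' interior A := by simpa using ha
  refine mem_of_superset (hNopen.mem_nhds hN0) ?_
  intro z hz
  have h1 : z + a ∈ closure (π '' V) := interior_subset hz
  have h2 : a ∈ closure (π '' V) := interior_subset ha
  have h3 : (z + a) - a ∈ closure (π '' U) := by
    refine map_mem_closure₂ continuous_sub h1 h2 ?_
    rintro b ⟨v, hv, rfl⟩ c ⟨w, hw, rfl⟩
    rw [← map_sub]
    refine ⟨v - w, ?_, rfl⟩
    have : v + -w ∈ U := hV'h v hv.1 (-w) (by simpa using hw.2)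
    simpa [sub_eq_add_neg] using this
  simpa using h3

/-- A single Michael-selection step: approximately lift a continuous map whose values lie
in `closure (π '' Un)` by a continuous map with values in the convex set `Un`. -/
theorem michael_step {E F P : Type*}
    [AddCommGroup E] [Module ℝ E] [TopologicalSpace E] [IsTopologicalAddGroup E]
    [ContinuousSMul ℝ E]
    [AddCommGroup F] [Module ℝ F] [TopologicalSpace F] [IsTopologicalAddGroup F]
    [MetricSpace P]
    (π : E →L[ℝ] F) {Un : Set E} (hUnc : Convex ℝ Un)
    {W : Set F} (hW : W ∈ 𝓝 (0 : F)) (hWc : Convex ℝ W)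
    (f : C(P, F)) (hf : ∀ p, f p ∈ closure (π '' Un)) :
    ∃ g : C(P, E), (∀ p, g p ∈ Un) ∧ ∀ p, π (g p) - f p ∈ W := by
  obtain ⟨W₂, hW₂, hW₂h⟩ := exists_nhds_zero_half hW
  have hnegW₂ : -W₂ ∈ 𝓝 (0 : F) := by
    have h := (continuous_neg (G := F)).continuousAt (x := (0 : F))
    rw [ContinuousAt, neg_zero] at h
    exact h hW₂
  set W₃ : Set F := W₂ ∩ -W₂ with hW₃def
  have hW₃ : W₃ ∈ 𝓝 (0 : F) := inter_mem hW₂ hnegW₂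
  have key : ∃ g : C(P, E), ∀ p, g p ∈ Un ∩ π ⁻¹' ((fun z => f p + z) '' W) := by
    apply exists_continuous_forall_mem_convex_of_local_const
    · exact fun p => hUnc.inter ((hWc.translate (f p)).linear_preimage (π : E →ₗ[ℝ] F))
    · intro p
      have himg : (fun z => f p + z) '' W₃ ∈ 𝓝 (f p) := by
        simpa using (Homeomorph.addLeft (f p)).isOpenMap.image_mem_nhds hW₃
      obtain ⟨y, hy1, hy2⟩ := mem_closure_iff_nhds.mp (hf p) _ himg
      obtain ⟨w, hw, rfl⟩ := hy1
      obtain ⟨c, hc, hcy⟩ := hy2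
      refine ⟨c, ?_⟩
      have hcont : ContinuousAt (fun y => f y - f p) p :=
        ((map_continuous f).sub continuous_const).continuousAt
      have hev : {y | f y - f p ∈ W₃} ∈ 𝓝 p := by
        apply hcont
        simpa using hW₃
      filter_upwards [hev] with y hy
      refine ⟨hc, w + (f p - f y), hW₂h w hw.1 (f p - f y) ?_, ?_⟩
      · have : -(f y - f p) ∈ W₂ := by simpa using hy.2
        simpa [neg_sub] using this
      · rw [hcy]; abel
  obtain ⟨g, hg⟩ := key
  refine ⟨g, fun p => (hg p).1, fun p => ?_⟩
  obtain ⟨z, hz, hzeq⟩ := (hg p).2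
  rw [← hzeq]
  simpa using hz

/-- Quantitative lifting lemma (Bartle–Graves / Michael): for every neighborhood `U` of
zero in `E` there is a neighborhood `W` of zero in `F` such that every continuous map
`P → F` with values in `W` lifts through `π` to a continuous map `P → E` with values
in `U`. -/
theorem lift_lemma {E F P : Type*}
    [AddCommGroup E] [UniformSpace E] [IsUniformAddGroup E] [Module ℝ E]
    [ContinuousSMul ℝ E] [LocallyConvexSpace ℝ E]
    [TopologicalSpace.MetrizableSpace E] [CompleteSpace E]
    [AddCommGroup F] [UniformSpace F] [IsUniformAddGroup F] [Module ℝ F]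
    [ContinuousSMul ℝ F] [LocallyConvexSpace ℝ F]
    [TopologicalSpace.MetrizableSpace F] [CompleteSpace F]
    [MetricSpace P]
    (π : E →L[ℝ] F) (hπ : Function.Surjective π) {U : Set E} (hU : U ∈ 𝓝 (0 : E)) :
    ∃ W ∈ 𝓝 (0 : F), ∀ f : C(P, F), (∀ p, f p ∈ W) →
      ∃ g : C(P, E), (∀ p, g p ∈ U) ∧ ∀ p, π (g p) = f p := by
  obtain ⟨BE, hBE⟩ := (𝓝 (0 : E)).exists_antitone_basis
  obtain ⟨BF, hBF⟩ := (𝓝 (0 : F)).exists_antitone_basis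
  -- initial convex symmetric neighborhood with U₀ + U₀ + U₀ ⊆ U
  obtain ⟨U', hU', hU'h⟩ := exists_nhds_zero_half hU
  obtain ⟨U'', hU'', hU''h⟩ := exists_nhds_zero_half hU'
  obtain ⟨U₀, hU₀, hU₀sub⟩ := exists_convex_symm_nhds hU''
  have hU''0 : (0 : E) ∈ U'' := mem_of_mem_nhds hU''
  have hU₀3 : ∀ a ∈ U₀, ∀ b ∈ U₀, ∀ c ∈ U₀, a + b + c ∈ U := by
    intro a ha b hb c hc
    have hbc : b + c ∈ U' := hU''h b (hU₀sub hb) c (hU₀sub hc)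
    have haU' : a ∈ U' := by
      have := hU''h a (hU₀sub ha) 0 hU''0
      simpa using this
    have := hU'h a haU' (b + c) hbc
    simpa [add_assoc] using this
  -- the chain Uₙ in E
  have hstep : ∀ (n : ℕ) (S : Set E), S ∈ 𝓝 (0 : E) →
      ∃ T, (T ∈ 𝓝 (0 : E) ∧ Convex ℝ T ∧ T = -T) ∧ T + T ⊆ S ∧ T ⊆ BE n := by
    intro n S hS
    obtain ⟨V, hV, hVh⟩ := exists_nhds_zero_half hS
    obtain ⟨T, hT, hTsub⟩ := exists_convex_symm_nhds (inter_mem hV (hBE.1.mem_of_mem trivial))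
    refine ⟨T, hT, ?_, fun x hx => (hTsub hx).2⟩
    rintro x ⟨a, ha, b, hb, rfl⟩
    exact hVh a (hTsub ha).1 b (hTsub hb).1
  choose stT hstT1 hstT2 hstT3 using hstep
  let Us : ℕ → {S : Set E // S ∈ 𝓝 (0 : E) ∧ Convex ℝ S ∧ S = -S} :=
    fun n => Nat.rec ⟨U₀, hU₀⟩ (fun k ih => ⟨stT k ih.1 ih.2.1, hstT1 k ih.1 ih.2.1⟩) n
  have hUsadd : ∀ n, (Us (n + 1)).1 + (Us (n + 1)).1 ⊆ (Us n).1 := fun n =>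
    hstT2 n (Us n).1 (Us n).2.1
  have hUsBE : ∀ n, (Us (n + 1)).1 ⊆ BE n := fun n => hstT3 n (Us n).1 (Us n).2.1
  have hUs0mem : ∀ n, (0 : E) ∈ (Us n).1 := fun n => mem_of_mem_nhds (Us n).2.1
  have hUsmono : ∀ n, (Us (n + 1)).1 ⊆ (Us n).1 := by
    intro n x hx
    have : x + 0 ∈ (Us (n + 1)).1 + (Us (n + 1)).1 := add_mem_add hx (hUs0mem (n + 1))
    simpa using hUsadd n this
  have hUsanti : ∀ k m, k ≤ m → (Us m).1 ⊆ (Us k).1 := by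
    intro k m h
    induction h with
    | refl => exact subset_rfl
    | step h ih => exact fun x hx => ih (hUsmono _ hx)
  -- the chain Wₙ in F
  have hWex : ∀ n : ℕ, ∃ Wn, (Wn ∈ 𝓝 (0 : F) ∧ Convex ℝ Wn ∧ Wn = -Wn) ∧
      Wn ⊆ closure (π '' (Us n).1) ∧ Wn ⊆ BF n := by
    intro n
    obtain ⟨Wn, hWn, hWnsub⟩ := exists_convex_symm_nhds
      (inter_mem (closure_image_mem_nhds π hπ (Us n).2.1) (hBF.1.mem_of_mem trivial))
    exact ⟨Wn, hWn, fun x hx => (hWnsub hx).1, fun x hx => (hWnsub hx).2⟩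
  choose W hW hWcl hWBF using hWex
  refine ⟨W 0, (hW 0).1, ?_⟩
  intro f hf
  -- iterative approximate lifting
  have hfstep : ∀ (n : ℕ) (h : C(P, F)), (∀ p, h p ∈ W n) →
      ∃ g : C(P, E), (∀ p, g p ∈ (Us n).1) ∧ ∀ p, h p - π (g p) ∈ W (n + 1) := by
    intro n h hh
    obtain ⟨g, hg1, hg2⟩ :=
      michael_step π (Us n).2.2.1 (hW (n + 1)).1 (hW (n + 1)).2.1 h fun p => hWcl n (hh p)
    refine ⟨g, hg1, fun p => ?_⟩
    rw [(hW (n + 1)).2.2]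
    have := hg2 p
    simpa [Set.mem_neg, neg_sub] using this
  choose gs hgs1 hgs2 using hfstep
  let πc : C(E, F) := ⟨π, π.continuous⟩
  let fseq : ∀ n : ℕ, {h : C(P, F) // ∀ p, h p ∈ W n} :=
    fun n => Nat.rec ⟨f, hf⟩ (fun k ih =>
      ⟨ih.1 - πc.comp (gs k ih.1 ih.2), fun p => by
        exact hgs2 k ih.1 ih.2 p⟩) n
  let g : ℕ → C(P, E) := fun n => gs n (fseq n).1 (fseq n).2
  have hfseqS : ∀ n, (fseq (n + 1)).1 = (fseq n).1 - πc.comp (g n) := fun n => rfl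
  have hgUs : ∀ n (p : P), g n p ∈ (Us n).1 := fun n => hgs1 n _ _
  -- partial sums
  let S : ℕ → P → E := fun m p => ∑ k ∈ Finset.range m, g k p
  have htel : ∀ m p, π (S m p) = f p - (fseq m).1 p := by
    intro m
    induction m with
    | zero =>
      intro p
      show π (∑ k ∈ Finset.range 0, g k p) = f p - f p
      simp
    | succ k ih =>
      intro p
      have hS : S (k + 1) p = S k p + g k p := by simp [S, Finset.sum_range_succ]
      rw [hS, map_add, ih p, hfseqS k]
      simp only [ContinuousMap.sub_apply, ContinuousMap.comp_apply]
      show f p - (fseq k).1 p + π (g k p) = f p - ((fseq k).1 p - πc (g k p))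
      show f p - (fseq k).1 p + π (g k p) = f p - ((fseq k).1 p - π (g k p))
      abel
  -- sums of tails lie in Us k
  have key : ∀ (d k : ℕ) (p : P),
      (∑ n ∈ Finset.Ico (k + 1) (k + 1 + d), g n p) ∈ (Us k).1 := by
    intro d
    induction d with
    | zero => intro k p; simpa using hUs0mem k
    | succ d ih =>
      intro k p
      have h1 : k + 1 < k + 1 + (d + 1) := by omega
      rw [Finset.sum_eq_sum_Ico_succ_bot h1]
      have heq : k + 1 + (d + 1) = (k + 1) + 1 + d := by omega
      have h2 := ih (k + 1) p
      rw [← heq] at h2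
      exact hUsadd k (add_mem_add (hgUs (k + 1) p) h2)
  have hdiff : ∀ k m : ℕ, 1 ≤ k → k ≤ m → ∀ p, S m p - S k p ∈ (Us (k - 1)).1 := by
    intro k m hk hkm p
    have h1 : S m p - S k p = ∑ n ∈ Finset.Ico k m, g n p :=
      (Finset.sum_Ico_eq_sub _ hkm).symm
    have h2 : Finset.Ico k m = Finset.Ico ((k - 1) + 1) ((k - 1) + 1 + (m - k)) := by
      congr 1 <;> omega
    rw [h1, h2]
    exact key (m - k) (k - 1) p
  -- uniform Cauchy
  have hUC : UniformCauchySeqOn S atTop univ := by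
    intro u hu
    rw [uniformity_eq_comap_nhds_zero E] at hu
    obtain ⟨N, hN, hNsub⟩ := hu
    obtain ⟨M, hM, hMsub⟩ := exists_convex_symm_nhds hN
    obtain ⟨j, -, hj⟩ := hBE.1.mem_iff.mp hM.1
    have hUsM : ∀ k, j + 1 ≤ k → (Us k).1 ⊆ M := by
      intro k hk
      exact (hUsanti (j + 1) k hk).trans ((hUsBE j).trans hj)
    filter_upwards [Filter.prod_mem_prod (Filter.eventually_ge_atTop (j + 2))
      (Filter.eventually_ge_atTop (j + 2))] with mn hmn p _
    obtain ⟨hm1, hm2⟩ : j + 2 ≤ mn.1 ∧ j + 2 ≤ mn.2 := hmn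
    apply hNsub
    show S mn.2 p - S mn.1 p ∈ N
    rcases le_total mn.1 mn.2 with h | h
    · have := hdiff mn.1 mn.2 (by omega) h p
      exact hMsub (hUsM (mn.1 - 1) (by omega) this)
    · have := hdiff mn.2 mn.1 (by omega) h p
      have hmem : S mn.1 p - S mn.2 p ∈ M := hUsM (mn.2 - 1) (by omega) this
      apply hMsub
      rw [hM.2.2]
      simpa using hmem
  -- pointwise limits
  have hT2 : T2Space E := inferInstance
  choose Gf hGf using fun p => cauchySeq_tendsto_of_complete (hUC.cauchySeq (mem_univ p))
  have hTU : TendstoUniformlyOn S Gf atTop univ :=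
    hUC.tendstoUniformlyOn_of_tendsto fun p _ => hGf p
  have hScont : ∀ m, Continuous (S m) := fun m =>
    continuous_finset_sum _ fun k _ => (g k).continuous
  have hcont : Continuous Gf :=
    (tendstoUniformlyOn_univ.mp hTU).continuous (Eventually.of_forall hScont).frequently
  -- values of the limit
  have hSU : ∀ m p, S m p ∈ (Us 0).1 + (Us 0).1 := by
    intro m p
    cases m with
    | zero =>
      refine ⟨0, hUs0mem 0, 0, hUs0mem 0, ?_⟩
      show (0 : E) + 0 = ∑ k ∈ Finset.range 0, g k p
      simp
    | succ m =>
      have hS : S (m + 1) p = g 0 p + ∑ n ∈ Finset.Ico 1 (m + 1), g n p := by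
        show (∑ k ∈ Finset.range (m + 1), g k p) = _
        rw [Finset.range_eq_Ico, Finset.sum_eq_sum_Ico_succ_bot (by omega)]
      rw [hS]
      have h2 : Finset.Ico 1 (m + 1) = Finset.Ico (0 + 1) (0 + 1 + m) := by congr 1 <;> omega
      rw [h2]
      exact add_mem_add (hgUs 0 p) (key m 0 p)
  have hGfU : ∀ p, Gf p ∈ U := by
    intro p
    have hcl : Gf p ∈ closure ((Us 0).1 + (Us 0).1) :=
      mem_closure_of_tendsto (hGf p) (Eventually.of_forall fun m => hSU m p)
    have h2 : Gf p ∈ ((Us 0).1 + (Us 0).1) + (Us 0).1 :=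
      closure_subset_add_of_symm (Us 0).2.1 (Us 0).2.2.2 hcl
    obtain ⟨x, hx, c, hc, hsum⟩ := h2
    obtain ⟨a, ha, b, hb, hab⟩ := hx
    have hGfp : Gf p = a + b + c := by rw [← hsum, ← hab]
    rw [hGfp]
    exact hU₀3 a ha b hb c hc
  -- π ∘ Gf = f
  have hπG : ∀ p, π (Gf p) = f p := by
    intro p
    have h1 : Tendsto (fun m => π (S m p)) atTop (𝓝 (π (Gf p))) :=
      (π.continuous.tendsto _).comp (hGf p)
    have h3 : Tendsto (fun m => (fseq m).1 p) atTop (𝓝 (0 : F)) :=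
      hBF.tendsto fun m => hWBF m ((fseq m).2 p)
    have h2 : Tendsto (fun m => π (S m p)) atTop (𝓝 (f p)) := by
      have := tendsto_const_nhds (x := f p) (f := atTop (α := ℕ)) |>.sub h3
      rw [sub_zero] at this
      refine this.congr fun m => ?_
      exact (htel m p).symm
    exact tendsto_nhds_unique h1 h2
  exact ⟨⟨Gf, hcont⟩, hGfU, hπG⟩

end Aux

/-- The induced map `π_* : C(P, E) → C(P, F)` on continuous maps from a compact metric
space, for a continuous linear surjection `π` of Fréchet spaces, is a continuous linear
surjection of Fréchet spaces, and hence open. -/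
theorem induced_map_on_continuous_maps_surjective_open (E F : Type*)
    [AddCommGroup E] [UniformSpace E] [IsUniformAddGroup E] [Module ℝ E]
    [ContinuousSMul ℝ E] [LocallyConvexSpace ℝ E]
    [TopologicalSpace.MetrizableSpace E] [CompleteSpace E]
    [AddCommGroup F] [UniformSpace F] [IsUniformAddGroup F] [Module ℝ F]
    [ContinuousSMul ℝ F] [LocallyConvexSpace ℝ F]
    [TopologicalSpace.MetrizableSpace F] [CompleteSpace F]
    (P : Type*) [MetricSpace P] [CompactSpace P]
    (π : E →L[ℝ] F) (hπ : Function.Surjective π)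
    (πs : C(P, E) → C(P, F))
    (hπs : ∀ (g : C(P, E)) (p : P), πs g p = π (g p)) :
    Continuous πs ∧
    (∀ g₁ g₂ : C(P, E), πs (g₁ + g₂) = πs g₁ + πs g₂) ∧
    (∀ (r : ℝ) (g : C(P, E)), πs (r • g) = r • πs g) ∧
    Function.Surjective πs ∧
    IsOpenMap πs := by
  have hπs_eq : πs = fun g => (⟨π, π.continuous⟩ : C(E, F)).comp g := by
    funext g
    exact ContinuousMap.ext (hπs g)
  have hcont : Continuous πs := by
    rw [hπs_eq]
    exact ContinuousMap.continuous_postcomp _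
  have hadd : ∀ g₁ g₂ : C(P, E), πs (g₁ + g₂) = πs g₁ + πs g₂ := by
    intro g₁ g₂
    ext p
    simp [hπs]
  have hsmul : ∀ (r : ℝ) (g : C(P, E)), πs (r • g) = r • πs g := by
    intro r g
    ext p
    simp [hπs]
  -- surjectivity
  have hsurj : Function.Surjective πs := by
    intro f
    obtain ⟨W₀, hW₀n, hlift⟩ := lift_lemma (P := P) π hπ (U := univ) univ_mem
    obtain ⟨W₁, hW₁, hW₁sub⟩ := exists_convex_symm_nhds hW₀n
    have himgcl : ∀ p : P, f p ∈ closure (π '' (univ : Set E)) := by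
      intro p
      rw [Set.image_univ, Set.range_eq_univ.mpr hπ]
      exact subset_closure (mem_univ _)
    obtain ⟨g₀, -, hg₀⟩ := michael_step π convex_univ hW₁.1 hW₁.2.1 f himgcl
    set h : C(P, F) := f - (⟨π, π.continuous⟩ : C(E, F)).comp g₀ with hh
    have hhW : ∀ p, h p ∈ W₀ := by
      intro p
      apply hW₁sub
      rw [hW₁.2.2]
      have := hg₀ p
      simpa [hh, Set.mem_neg, neg_sub] using this
    obtain ⟨d, -, hd⟩ := hlift h hhW
    refine ⟨g₀ + d, ?_⟩
    ext p
    rw [hπs]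
    simp only [ContinuousMap.add_apply, map_add, hd p]
    simp [hh]
  -- openness
  have hopen : IsOpenMap πs := by
    intro O hO
    rw [isOpen_iff_mem_nhds]
    rintro f' ⟨g₀, hg₀O, rfl⟩
    -- basic entourage neighborhood inside O
    obtain ⟨V', hV', hball⟩ := UniformSpace.mem_nhds_iff.mp (hO.mem_nhds hg₀O)
    obtain ⟨V, hV, hVsub⟩ :=
      (ContinuousMap.hasBasis_compactConvergenceUniformity_of_compact.mem_iff.mp hV')
    rw [uniformity_eq_comap_nhds_zero E] at hV
    obtain ⟨N, hN, hNsub⟩ := hV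
    obtain ⟨W, hWn, hlift⟩ := lift_lemma (P := P) π hπ hN
    -- the entourage in C(P, F) given by W
    have hWent : {fg : C(P, F) × C(P, F) | ∀ p, (fg.1 p, fg.2 p) ∈
        (fun x : F × F => x.2 - x.1) ⁻¹' W} ∈ 𝓤 C(P, F) := by
      apply ContinuousMap.hasBasis_compactConvergenceUniformity_of_compact.mem_of_mem
      rw [uniformity_eq_comap_nhds_zero F]
      exact preimage_mem_comap hWn
    refine mem_of_superset (UniformSpace.ball_mem_nhds _ hWent) ?_
    intro f' hf'
    -- f' p - πs g₀ p ∈ W for all p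
    have hf'W : ∀ p, f' p - πs g₀ p ∈ W := fun p => hf' p
    set h : C(P, F) := f' - πs g₀ with hh
    obtain ⟨d, hdN, hd⟩ := hlift h fun p => by simpa [hh] using hf'W p
    refine ⟨g₀ + d, ?_, ?_⟩
    · apply hball
      apply hVsub
      intro p
      apply hNsub
      show (g₀ + d) p - g₀ p ∈ N
      simpa using hdN p
    · ext p
      rw [hπs]
      simp only [ContinuousMap.add_apply, map_add]
      have := hd p
      rw [this]
      simp [hh, hπs]
  exact ⟨hcont, hadd, hsmul, hsurj, hopen⟩
end
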